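/- Let Γ be a connected, bounded-valence graph and let Λ ⊆ Π ⊆ Γ be connected subgraphs. If incut(Λ) (computed with Λ as a subgraph of Γ) is finite and the Hausdorff distance in Γ between V(Λ) and V(Π) is finite, then incut(Π) is finite. -/

import Mathlib

open SimpleGraph

namespace Paper

variable {V W : Type*}

/-- Locally finite graph: every vertex has finite degree. -/
def LocFin (G : SimpleGraph V) : Prop := ∀ v : V, (G.neighborSet v).Finite

/-- All vertex degrees are at most `d`. -/
def DegLe (G : SimpleGraph V) (d : ℕ) : Prop :=
  ∀ v : V, (G.neighborSet v).Finite ∧ (G.neighborSet v).ncard ≤ d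

/-- Bounded valence. -/
def BddVal (G : SimpleGraph V) : Prop := ∃ d : ℕ, DegLe G d

/-- `(l, e)`-quasi-isometric embedding between the vertex sets of two graphs. -/
def IsQIE (G : SimpleGraph V) (H : SimpleGraph W) (l e : ℝ) (f : V → W) : Prop :=
  ∀ x y : V,
    (G.dist x y : ℝ) / l - e ≤ (H.dist (f x) (f y) : ℝ) ∧
      (H.dist (f x) (f y) : ℝ) ≤ l * (G.dist x y : ℝ) + e

/-- Coarse surjectivity: every vertex of the target lies within distance `e` of the image. -/
def CoarseSurj (H : SimpleGraph W) (e : ℝ) (f : V → W) : Prop :=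
  ∀ w : W, ∃ x : V, (H.dist w (f x) : ℝ) ≤ e

/-- `(l, e)`-quasi-isometry. -/
def IsQI (G : SimpleGraph V) (H : SimpleGraph W) (l e : ℝ) (f : V → W) : Prop :=
  IsQIE G H l e f ∧ CoarseSurj H e f

/-- `g` is an `h`-quasi-inverse of `f`. -/
def IsQInv (G : SimpleGraph V) (h : ℝ) (f : V → W) (g : W → V) : Prop :=
  ∀ x : V, (G.dist (g (f x)) x : ℝ) ≤ h

/-- Reachability by a walk all of whose vertices avoid the set `S`. -/
def ReachOut (G : SimpleGraph V) (S : Set V) (a b : V) : Prop :=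
  ∃ w : G.Walk a b, ∀ v ∈ w.support, v ∉ S

/-- A one-way infinite simple ray. -/
def RayIn (G : SimpleGraph V) (r : ℕ → V) : Prop :=
  Function.Injective r ∧ ∀ n : ℕ, G.Adj (r n) (r (n + 1))

/-- End-equivalence of rays: for every finite vertex set they have tails in the same
connected component of the graph with that set deleted. -/
def EndEquiv (G : SimpleGraph V) (r₁ r₂ : ℕ → V) : Prop :=
  ∀ S : Set V, S.Finite → ∃ N : ℕ, ∀ m n : ℕ, N ≤ m → N ≤ n → ReachOut G S (r₁ m) (r₂ n)

/-- Two points (encoded as sequences: a constant sequence for a vertex, a ray for an end)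
lie in distinct connected components of `G` with the vertex set `S` deleted. -/
def SepComps (G : SimpleGraph V) (S : Set V) (a b : ℕ → V) : Prop :=
  ∃ N : ℕ,
    (∀ m n : ℕ, N ≤ m → N ≤ n → ReachOut G S (a m) (a n)) ∧
    (∀ m n : ℕ, N ≤ m → N ≤ n → ReachOut G S (b m) (b n)) ∧
    (∀ m n : ℕ, N ≤ m → N ≤ n → ¬ ReachOut G S (a m) (b n))

/-- `vs(G) ≥ N`: any vertex set separating two ends has at least `N` elements. -/
def VsGe (G : SimpleGraph V) (N : ℕ) : Prop :=
  ∀ r₁ r₂ : ℕ → V, RayIn G r₁ → RayIn G r₂ →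
    ∀ S : Set V, S.Finite → SepComps G S r₁ r₂ → N ≤ S.ncard

/-- `vs(G) ≥ c` for a real threshold `c`. -/
def VsGeR (G : SimpleGraph V) (c : ℝ) : Prop :=
  ∀ r₁ r₂ : ℕ → V, RayIn G r₁ → RayIn G r₂ →
    ∀ S : Set V, S.Finite → SepComps G S r₁ r₂ → c ≤ (S.ncard : ℝ)

/-- `U` is a connected component of `G` with the vertex set `A` deleted. -/
def IsCompOut (G : SimpleGraph V) (A U : Set V) : Prop :=
  ∃ a ∈ U, ∀ b : V, ReachOut G A a b ↔ b ∈ U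

/-- The edge coboundary `δb` of a vertex set `b`. -/
def cob (G : SimpleGraph V) (b : Set V) : Set (Sym2 V) :=
  {e | ∃ x y : V, e = s(x, y) ∧ G.Adj x y ∧ x ∈ b ∧ y ∉ b}

/-- Membership in the Boolean ring `𝓑G` of vertex sets with finite coboundary. -/
def MemBX (G : SimpleGraph V) (b : Set V) : Prop := (cob G b).Finite

/-- The set of endpoints of the edges of `δb`. -/
def cobVerts (G : SimpleGraph V) (b : Set V) : Set V :=
  {v | ∃ w : V, s(v, w) ∈ cob G b}

/-- A tight element: both sides induce connected subgraphs. -/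
def Tight (G : SimpleGraph V) (b : Set V) : Prop :=
  (G.induce b).Connected ∧ (G.induce bᶜ).Connected

/-- Vertices of `A` that are endpoints of an edge with the other endpoint in `U`. -/
def AttachSet (G : SimpleGraph V) (A U : Set V) : Set V :=
  {v | v ∈ A ∧ ∃ u ∈ U, G.Adj v u}

/-- `incut(A) ≤ k` for a vertex set `A`, with the intrinsic metric of `G.induce A`. -/
def IncutBddSet (G : SimpleGraph V) (A : Set V) (k : ℕ) : Prop :=
  ∀ U : Set V, IsCompOut G A U →
    ∀ v w : A, (v : V) ∈ AttachSet G A U → (w : V) ∈ AttachSet G A U →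
      (G.induce A).dist v w ≤ k

/-- `outcut(A) ≤ k` for a vertex set `A`. -/
def OutcutBddSet (G : SimpleGraph V) (A : Set V) (k : ℕ) : Prop :=
  ∀ U : Set V, IsCompOut G A U → IncutBddSet G U k

/-- Uniform coboundary for a vertex set. -/
def UnifCobSet (G : SimpleGraph V) (A : Set V) : Prop :=
  (∃ k : ℕ, IncutBddSet G A k) ∧ (∃ k : ℕ, OutcutBddSet G A k)

/-- `incut(L) ≤ k` for a subgraph `L`, with its own intrinsic metric. -/
def IncutBddSub (G : SimpleGraph V) (L : G.Subgraph) (k : ℕ) : Prop :=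
  ∀ U : Set V, IsCompOut G L.verts U →
    ∀ v w : L.verts, (v : V) ∈ AttachSet G L.verts U → (w : V) ∈ AttachSet G L.verts U →
      L.coe.dist v w ≤ k

/-- `outcut(L) ≤ k` for a subgraph `L`. -/
def OutcutBddSub (G : SimpleGraph V) (L : G.Subgraph) (k : ℕ) : Prop :=
  ∀ U : Set V, IsCompOut G L.verts U → IncutBddSet G U k

/-- Uniform coboundary for a subgraph. -/
def UnifCobSub (G : SimpleGraph V) (L : G.Subgraph) : Prop :=
  (∃ k : ℕ, IncutBddSub G L k) ∧ (∃ k : ℕ, OutcutBddSub G L k)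

/-- Quasi-transitive graph: the automorphism group has finitely many orbits of vertices. -/
def QuasiTransitive (G : SimpleGraph V) : Prop :=
  ∃ F : Set V, F.Finite ∧ ∀ v : V, ∃ e : G ≃g G, ∃ w ∈ F, e w = v

/-- Hausdorff distance between two vertex sets is at most `r`. -/
def HausBdd (G : SimpleGraph V) (A B : Set V) (r : ℝ) : Prop :=
  (∀ a ∈ A, ∃ b ∈ B, (G.dist a b : ℝ) ≤ r) ∧ (∀ b ∈ B, ∃ a ∈ A, (G.dist a b : ℝ) ≤ r)

/-- Reachability by a walk avoiding the edge set `F`. -/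
def ReachAvoidE (G : SimpleGraph V) (F : Set (Sym2 V)) (a b : V) : Prop :=
  ∃ w : G.Walk a b, ∀ e ∈ w.edges, e ∉ F

/-- The ends of the rays `r₁`, `r₂` are separated by deleting the edge set `F`. -/
def SepEnds (G : SimpleGraph V) (F : Set (Sym2 V)) (r₁ r₂ : ℕ → V) : Prop :=
  ∃ N : ℕ, ∀ m n : ℕ, N ≤ m → N ≤ n → ¬ ReachAvoidE G F (r₁ m) (r₂ n)

/-- Accessibility: some `k ≥ 1` such that any two distinct ends can be separated by
deleting at most `k` edges. -/
def Accessible (G : SimpleGraph V) : Prop :=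
  ∃ k : ℕ, 1 ≤ k ∧ ∀ r₁ r₂ : ℕ → V, RayIn G r₁ → RayIn G r₂ → ¬ EndEquiv G r₁ r₂ →
    ∃ F : Set (Sym2 V), F.Finite ∧ F.ncard ≤ k ∧ SepEnds G F r₁ r₂

/-- `l`-quasi-action of a group on the vertex set of a graph. -/
def IsQAct {G₀ : Type*} [Group G₀] (G : SimpleGraph V) (l : ℝ) (φ : G₀ → V → V) : Prop :=
  (∀ g : G₀, IsQI G G l l (φ g)) ∧
  (∀ (g h : G₀) (x : V), (G.dist (φ (g * h) x) (φ g (φ h x)) : ℝ) ≤ l) ∧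
  (∀ g : G₀, IsQInv G l (φ g) (φ g⁻¹) ∧ IsQInv G l (φ g⁻¹) (φ g))

/-- `B`-cobounded quasi-action. -/
def Cobdd {G₀ : Type*} [Group G₀] (G : SimpleGraph V) (B : ℝ) (φ : G₀ → V → V) : Prop :=
  ∀ x y : V, ∃ g : G₀, (G.dist x (φ g y) : ℝ) ≤ B

/-- The diameter (in `ℕ`) of a vertex set. -/
noncomputable def setDiam (G : SimpleGraph V) (S : Set V) : ℕ :=
  sSup {d : ℕ | ∃ x ∈ S, ∃ y ∈ S, G.dist x y = d}

/-- 2-connected: connected, at least three vertices, and deleting any single vertex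
leaves it connected. -/
def TwoConnected (G : SimpleGraph V) : Prop :=
  G.Connected ∧ (∃ a b c : V, a ≠ b ∧ a ≠ c ∧ b ≠ c) ∧
    ∀ v : V, (G.induce {w : V | w ≠ v}).Connected

/-- Tree decomposition. -/
def IsTreeDecomp {VT : Type*} (X : SimpleGraph V) (T : SimpleGraph VT) (B : VT → Set V) :
    Prop :=
  T.IsTree ∧ (∀ x : V, ∃ u : VT, x ∈ B u) ∧
    ∀ u v w : VT, (∃ p : T.Walk u w, p.IsPath ∧ v ∈ p.support) → B u ∩ B w ⊆ B v

/-- Bounded adhesion. -/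
def BddAdhesion {VT : Type*} (T : SimpleGraph VT) (B : VT → Set V) : Prop :=
  ∃ N : ℕ, ∀ u w : VT, T.Adj u w → (B u ∩ B w).Finite ∧ (B u ∩ B w).ncard ≤ N

/-- Connected parts. -/
def ConnParts {VT : Type*} (X : SimpleGraph V) (B : VT → Set V) : Prop :=
  ∀ u : VT, (X.induce (B u)).Connected

/-- Replacing each bag by its closed `r`-neighbourhood. -/
def ballBag {VT : Type*} (X : SimpleGraph V) (B : VT → Set V) (r : ℕ) : VT → Set V :=
  fun u => {x : V | ∃ y ∈ B u, X.dist x y ≤ r}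

/-- A point of `G` which is either a vertex lying outside `B(S;R)` (encoded as a constant
sequence) or an end (encoded as a ray representing it). -/
def PtSeq (G : SimpleGraph V) (S : Set V) (R : ℝ) (a : ℕ → V) : Prop :=
  (∃ v : V, a = Function.const ℕ v ∧ ∀ s ∈ S, R < (G.dist v s : ℝ)) ∨ RayIn G a

/-- A subring of `𝓑G`: contains `∅`, and is closed under intersection and
symmetric difference. -/
def IsSubring (G : SimpleGraph V) (R : Set (Set V)) : Prop :=
  (∀ b ∈ R, MemBX G b) ∧ ∅ ∈ R ∧
    (∀ a ∈ R, ∀ b ∈ R, a ∩ b ∈ R) ∧ (∀ a ∈ R, ∀ b ∈ R, symmDiff a b ∈ R)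

/-- The subring generated by a family. -/
def genSubring (G : SimpleGraph V) (E : Set (Set V)) : Set (Set V) :=
  ⋂₀ {R : Set (Set V) | IsSubring G R ∧ E ⊆ R}

/-- Two vertex sets are nested. -/
def Nested (a b : Set V) : Prop :=
  a ∩ b = ∅ ∨ a ∩ bᶜ = ∅ ∨ aᶜ ∩ b = ∅ ∨ aᶜ ∩ bᶜ = ∅

/-- A nested family: closed under complementation and pairwise nested. -/
def NestedFam (E : Set (Set V)) : Prop :=
  (∀ b ∈ E, bᶜ ∈ E) ∧ ∀ a ∈ E, ∀ b ∈ E, Nested a b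

/-- A `G₀`-invariant family of vertex sets. -/
def GInvFam (G₀ : Type*) [Group G₀] [MulAction G₀ V] (E : Set (Set V)) : Prop :=
  ∀ g : G₀, ∀ b ∈ E, (fun x => g • x) '' b ∈ E

/-- A `G₀`-finite family of vertex sets: it meets only finitely many orbits. -/
def GFinFam (G₀ : Type*) [Group G₀] [MulAction G₀ V] (E : Set (Set V)) : Prop :=
  ∃ F : Set (Set V), F.Finite ∧ F ⊆ E ∧
    ∀ b ∈ E, ∃ g : G₀, ∃ c ∈ F, (fun x => g • x) '' c = b

/-- `g` stabilises the subgraph `L` setwise. -/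
def StabSub {G₀ : Type*} [Group G₀] [MulAction G₀ V] (G : SimpleGraph V) (g : G₀)
    (L : G.Subgraph) : Prop :=
  (∀ v : V, v ∈ L.verts ↔ g • v ∈ L.verts) ∧
    (∀ a b : V, L.Adj a b ↔ L.Adj (g • a) (g • b))

end Paper

/-!
Let `U` be a component of `Γ - P` and `C ⊇ U` the component of `Γ - Λ` containing it. An
attachment vertex `v` of `U` on `P` either lies in `Λ`, where it attaches to `C`, or lies in
`C`. In the latter case follow a path in `P` from `v` until it first meets `Λ`, at an attachment
vertex `y` of `C`. Every earlier vertex `t` of the path lies in `C ∩ P`, so it is within `r` of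
`Λ`, hence (along a geodesic to `Λ`) within `r` of an attachment vertex of `C`, hence within
`r + k` of `y`. With valence at most `d` that ball has at most `(d + 1) ^ (r + k)` vertices, which
bounds the length of the path, and `incut(P) ≤ 2 (d + 1) ^ (r + k) + k`.
-/

namespace Paper

variable {V W : Type*}

section ReachOut

variable {G : SimpleGraph W} {Γ : SimpleGraph V} {S : Set V} {a b c : V}

lemma reachOut_refl (ha : a ∉ S) : ReachOut Γ S a a :=
  ⟨Walk.nil, by simpa using ha⟩

lemma ReachOut.trans (h₁ : ReachOut Γ S a b) (h₂ : ReachOut Γ S b c) : ReachOut Γ S a c := by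
  obtain ⟨p₁, hp₁⟩ := h₁
  obtain ⟨p₂, hp₂⟩ := h₂
  refine ⟨p₁.append p₂, fun v hv => ?_⟩
  rcases Walk.mem_support_append_iff p₁ p₂ |>.mp hv with h | h
  exacts [hp₁ v h, hp₂ v h]

lemma reachOut_of_adj (h : Γ.Adj a b) (ha : a ∉ S) (hb : b ∉ S) : ReachOut Γ S a b :=
  ⟨h.toWalk, by simp [ha, hb]⟩

lemma ReachOut.left_notMem (h : ReachOut Γ S a b) : a ∉ S :=
  h.elim fun p hp => hp a p.start_mem_support

lemma ReachOut.right_notMem (h : ReachOut Γ S a b) : b ∉ S :=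
  h.elim fun p hp => hp b p.end_mem_support

lemma ReachOut.mono {T : Set V} (hTS : T ⊆ S) (h : ReachOut Γ S a b) : ReachOut Γ T a b :=
  h.elim fun p hp => ⟨p, fun v hv hvT => hp v hv (hTS hvT)⟩

lemma ReachOut.map (f : G →g Γ) {x y : W} (h : ReachOut G (f ⁻¹' S) x y) :
    ReachOut Γ S (f x) (f y) :=
  h.elim fun p hp => ⟨p.map f, by simpa [Walk.support_map] using hp⟩

lemma reachOut_of_mem_support {T : Set W} {x y t : W} {p : G.Walk x y}
    (hp : ∀ s ∈ p.support, s ∉ T) (ht : t ∈ p.support) : ReachOut G T x t := by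
  classical
  exact ⟨p.takeUntil t ht, fun s hs => hp s (p.support_takeUntil_subset_support ht hs)⟩

lemma isCompOut_setOf_reachOut (ha : a ∉ S) : IsCompOut Γ S {b | ReachOut Γ S a b} :=
  ⟨a, reachOut_refl ha, fun _ => Iff.rfl⟩

end ReachOut

lemma exists_walk_outside_adj_mem {G : SimpleGraph W} {T : Set W} {x z : W} (p : G.Walk x z)
    (hx : x ∉ T) (hz : z ∈ T) :
    ∃ u y, ∃ q : G.Walk x u, (∀ t ∈ q.support, t ∉ T) ∧ G.Adj u y ∧ y ∈ T ∧
      q.length < p.length := by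
  induction p with
  | nil => exact absurd hz hx
  | @cons x b z h p ih =>
    by_cases hb : b ∈ T
    · exact ⟨x, b, .nil, by simpa using hx, h, hb, by simp⟩
    · obtain ⟨u, y, q, hq, hadj, hy, hlen⟩ := ih hb hz
      refine ⟨u, y, .cons h q, ?_, hadj, hy, by simpa using hlen⟩
      simpa [Walk.support_cons] using ⟨hx, hq⟩

lemma dist_map_le {G : SimpleGraph W} {H : SimpleGraph V} (f : G →g H) {u v : W}
    (h : G.Reachable u v) : H.dist (f u) (f v) ≤ G.dist u v := by
  obtain ⟨p, hp⟩ := h.exists_walk_length_eq_dist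
  simpa [hp] using dist_le (p.map f)

section BoundedValence

variable {Γ : SimpleGraph V} {d : ℕ}

lemma exists_finset_dist_le_card_le (hc : Γ.Connected) (hd : DegLe Γ d) (c : V) (n : ℕ) :
    ∃ F : Finset V, (∀ x, Γ.dist c x ≤ n → x ∈ F) ∧ F.card ≤ (d + 1) ^ n := by
  classical
  induction n with
  | zero => exact ⟨{c}, fun x hx => by simpa [hc.dist_eq_zero_iff, eq_comm] using hx, by simp⟩
  | succ n ih =>
    obtain ⟨F, hF, hcard⟩ := ih
    have hclosed (y : V) : (insert y (hd y).1.toFinset).card ≤ d + 1 := by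
      grw [Finset.card_insert_le, ← Set.ncard_eq_toFinset_card _ (hd y).1, (hd y).2]
    refine ⟨F.biUnion fun y => insert y (hd y).1.toFinset, fun x hx => ?_, ?_⟩
    · obtain ⟨y, hy, hxy⟩ : ∃ y, Γ.dist c y ≤ n ∧ (x = y ∨ Γ.Adj y x) := by
        obtain ⟨p, hp⟩ := hc.exists_walk_length_eq_dist x c
        cases p with
        | nil => exact ⟨_, by simp, .inl rfl⟩
        | cons h q =>
          refine ⟨_, ?_, .inr h.symm⟩
          rw [SimpleGraph.dist_comm] at hx ⊢
          have := dist_le q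
          simp only [Walk.length_cons] at hp
          omega
      exact Finset.mem_biUnion.2 ⟨y, hF y hy, by simpa using hxy⟩
    · calc _ ≤ F.card * (d + 1) := Finset.card_biUnion_le_card_mul _ _ _ fun y _ => hclosed y
        _ ≤ (d + 1) ^ n * (d + 1) := Nat.mul_le_mul_right _ hcard
        _ = (d + 1) ^ (n + 1) := (pow_succ _ _).symm

lemma length_lt_of_isPath_of_dist_le (hc : Γ.Connected) (hd : DegLe Γ d) {G : SimpleGraph W}
    {f : W → V} (hf : Function.Injective f) {x y : W} {p : G.Walk x y} (hp : p.IsPath)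
    {c : V} {n : ℕ} (hn : ∀ t ∈ p.support, Γ.dist c (f t) ≤ n) : p.length < (d + 1) ^ n := by
  classical
  obtain ⟨F, hF, hcard⟩ := exists_finset_dist_le_card_le hc hd c n
  have hnodup : (p.support.map f).Nodup := hp.support_nodup.map hf
  calc p.length < p.support.length := by rw [Walk.length_support]; omega
    _ = (p.support.map f).toFinset.card := by
        rw [List.toFinset_card_of_nodup hnodup, List.length_map]
    _ ≤ F.card := Finset.card_le_card fun v hv => by
        obtain ⟨t, ht, rfl⟩ := List.mem_map.1 (List.mem_toFinset.1 hv)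
        exact hF _ (hn t ht)
    _ ≤ (d + 1) ^ n := hcard

end BoundedValence

section Incut

variable {Γ : SimpleGraph V} {L P : Γ.Subgraph} {k : ℕ} {a₀ : V}

lemma exists_mem_attachSet_dist_le (hc : Γ.Connected) {S : Set V} {t s : V}
    (ht : ReachOut Γ S a₀ t) (hs : s ∈ S) :
    ∃ q ∈ AttachSet Γ S {b | ReachOut Γ S a₀ b}, Γ.dist t q ≤ Γ.dist t s := by
  obtain ⟨p, hp⟩ := hc.exists_walk_length_eq_dist t s
  obtain ⟨u, y, q, hq, hadj, hy, hlen⟩ := exists_walk_outside_adj_mem p ht.right_notMem hs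
  refine ⟨y, ⟨hy, u, ht.trans ⟨q, hq⟩, hadj.symm⟩, ?_⟩
  calc Γ.dist t y ≤ (q.concat hadj).length := dist_le _
    _ = q.length + 1 := Walk.length_concat _ _
    _ ≤ Γ.dist t s := by omega

lemma dist_le_of_mem_attachSet (hc : Γ.Connected) (hLc : L.coe.Connected)
    (hk : IncutBddSub Γ L k) {y t s : V}
    (hy : y ∈ AttachSet Γ L.verts {b | ReachOut Γ L.verts a₀ b})
    (ht : ReachOut Γ L.verts a₀ t) (hs : s ∈ L.verts) :
    Γ.dist y t ≤ k + Γ.dist s t := by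
  obtain ⟨q, hq, hqt⟩ := exists_mem_attachSet_dist_le hc ht hs
  have hyq : Γ.dist y q ≤ k :=
    (dist_map_le L.hom (hLc.preconnected ⟨y, hy.1⟩ ⟨q, hq.1⟩)).trans <|
      hk _ (isCompOut_setOf_reachOut ht.left_notMem) ⟨y, hy.1⟩ ⟨q, hq.1⟩ hy hq
  calc Γ.dist y t ≤ Γ.dist y q + Γ.dist q t := hc.dist_triangle
    _ ≤ k + Γ.dist s t := by
        rw [SimpleGraph.dist_comm (u := q), SimpleGraph.dist_comm (u := s)]
        omega

variable {d r : ℕ}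

lemma exists_mem_attachSet_dist_le_pow (hc : Γ.Connected) (hd : DegLe Γ d) (hLP : L ≤ P)
    (hLc : L.coe.Connected) (hPc : P.coe.Connected) (hk : IncutBddSub Γ L k)
    (hr : ∀ b ∈ P.verts, ∃ a ∈ L.verts, Γ.dist a b ≤ r)
    (v : P.verts) {u : V} (hu : ReachOut Γ L.verts a₀ u) (hvu : Γ.Adj v u) :
    ∃ y : P.verts, (y : V) ∈ AttachSet Γ L.verts {b | ReachOut Γ L.verts a₀ b} ∧
      P.coe.dist v y ≤ (d + 1) ^ (r + k) := by
  classical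
  by_cases hvL : (v : V) ∈ L.verts
  · exact ⟨v, ⟨hvL, u, hu, hvu⟩, by simp⟩
  have hv : ReachOut Γ L.verts a₀ v := hu.trans (reachOut_of_adj hvu.symm hu.right_notMem hvL)
  obtain ⟨z⟩ := hLc.nonempty
  obtain ⟨p⟩ := hPc.preconnected v ⟨z, hLP.1 z.2⟩
  obtain ⟨u', y, q, hq, hadj, hy, -⟩ :=
    exists_walk_outside_adj_mem (T := Subtype.val ⁻¹' L.verts) p hvL z.2
  have hyC : (y : V) ∈ AttachSet Γ L.verts {b | ReachOut Γ L.verts a₀ b} :=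
    ⟨hy, u', hv.trans (ReachOut.map P.hom ⟨q, hq⟩), (P.adj_sub hadj).symm⟩
  have hclose : ∀ t ∈ (q.concat hadj).support, Γ.dist y t ≤ r + k := by
    intro t ht
    rcases (by simpa [Walk.support_concat] using ht : t ∈ q.support ∨ t = y) with ht | rfl
    · obtain ⟨s, hs, hst⟩ := hr t t.2
      have hvt : ReachOut Γ L.verts v t := ReachOut.map P.hom (reachOut_of_mem_support hq ht)
      have := dist_le_of_mem_attachSet hc hLc hk hyC (hv.trans hvt) hs
      omega
    · simp
  have hlen := length_lt_of_isPath_of_dist_le hc hd Subtype.val_injective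
    (q.concat hadj).bypass_isPath
    fun t ht => hclose t ((q.concat hadj).support_bypass_subset_support ht)
  exact ⟨y, hyC, (dist_le _).trans hlen.le⟩

end Incut

end Paper

open Paper in
theorem stmt15 {V : Type*} (Γ : SimpleGraph V) (hc : Γ.Connected) (hbv : BddVal Γ)
    (Λ P : Γ.Subgraph) (hΛP : Λ ≤ P)
    (hΛc : Λ.coe.Connected) (hPc : P.coe.Connected)
    (hin : ∃ k : ℕ, IncutBddSub Γ Λ k)
    (hhaus : ∃ r : ℝ, HausBdd Γ Λ.verts P.verts r) :
    ∃ k' : ℕ, IncutBddSub Γ P k' := by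
  obtain ⟨d, hd⟩ := hbv
  obtain ⟨k, hk⟩ := hin
  obtain ⟨r, hr⟩ := hhaus
  have hr' : ∀ b ∈ P.verts, ∃ a ∈ Λ.verts, Γ.dist a b ≤ ⌈r⌉₊ := fun b hb =>
    let ⟨a, ha, hab⟩ := hr.2 b hb
    ⟨a, ha, by exact_mod_cast hab.trans (Nat.le_ceil r)⟩
  refine ⟨(d + 1) ^ (⌈r⌉₊ + k) + k + (d + 1) ^ (⌈r⌉₊ + k), ?_⟩
  rintro U ⟨a₀, -, hU⟩ v w ⟨-, u, hu, hvu⟩ ⟨-, u', hu', hwu'⟩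
  have hu : ReachOut Γ Λ.verts a₀ u := ((hU u).2 hu).mono hΛP.1
  obtain ⟨y, hy, hvy⟩ := exists_mem_attachSet_dist_le_pow hc hd hΛP hΛc hPc hk hr' v hu hvu
  obtain ⟨y', hy', hwy'⟩ := exists_mem_attachSet_dist_le_pow hc hd hΛP hΛc hPc hk hr' w
    (((hU u').2 hu').mono hΛP.1) hwu'
  have hyy' : P.coe.dist y y' ≤ k :=
    (dist_map_le (Subgraph.inclusion hΛP) (hΛc.preconnected ⟨y, hy.1⟩ ⟨y', hy'.1⟩)).trans <|
      hk _ (isCompOut_setOf_reachOut hu.left_notMem) _ _ hy hy'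
  calc P.coe.dist v w ≤ P.coe.dist v y + P.coe.dist y y' + P.coe.dist y' w :=
        hPc.dist_triangle.trans (Nat.add_le_add_right hPc.dist_triangle _)
    _ ≤ _ := by rw [SimpleGraph.dist_comm (u := y')]; omega
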